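/- arXiv:math/0701276 — 2 statements merged into one kernel-verified Lean document; each statement's English description precedes it below -/
import Mathlib

section
/- Let A be a C*-algebra, X a Hilbert A-module, and m ∈ X such that p := ⟨m, m⟩ is a projection in A (p² = p = p*). Then m·p = m, the map S_m : pA → X given by S_m(pa) = m·(pa) preserves inner products, S_m is adjointable with adjoint S_m*(x) = ⟨m, x⟩ taking values in pA, and S_m S_m* is the orthogonal projection of X onto S_m(pA). -/
/-- A (pre-)Hilbert module over a C*-algebra `A`: a right `A`-module `X` with an
`A`-valued inner product. -/
structure HilbertModuleStr (A : Type*) (X : Type*) [NormedRing A] [StarRing A] [CStarRing A]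
    [PartialOrder A] [StarOrderedRing A] [AddCommGroup X] where
  smul : X → A → X
  inner : X → X → A
  inner_add_left : ∀ x y z, inner (x + y) z = inner x z + inner y z
  inner_add_right : ∀ x y z, inner x (y + z) = inner x y + inner x z
  inner_smul_right : ∀ x y a, inner x (smul y a) = inner x y * a
  star_inner : ∀ x y, star (inner x y) = inner y x
  inner_self_nonneg : ∀ x, 0 ≤ inner x x
  inner_self_eq_zero : ∀ x, inner x x = 0 → x = 0
  smul_add : ∀ x a b, smul x (a + b) = smul x a + smul x b
  add_smul : ∀ x y a, smul (x + y) a = smul x a + smul y a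
  smul_mul : ∀ x a b, smul x (a * b) = smul (smul x a) b
  smul_one : ∀ x, smul x 1 = x

/-- If `m ∈ X` is such that `p := ⟨m,m⟩` is a projection in `A`, then `m·p = m`, the map
`S_m : pa ↦ m·(pa)` from `pA` to `X` preserves inner products, its adjoint `x ↦ ⟨m,x⟩`
takes values in `pA`, and `S_m S_m* : x ↦ m·⟨m,x⟩` is the orthogonal projection of `X`
onto `S_m(pA)`. -/
theorem stmt3 {A X : Type*} [NormedRing A] [StarRing A] [CStarRing A] [PartialOrder A]
    [StarOrderedRing A] [CompleteSpace A] [AddCommGroup X]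
    (hX : HilbertModuleStr A X) (m : X) (p : A) (hp : p = hX.inner m m)
    (hp2 : p * p = p) (hpstar : star p = p) :
    hX.smul m p = m ∧
    (∀ a b : A, hX.inner (hX.smul m (p * a)) (hX.smul m (p * b)) = star (p * a) * (p * b)) ∧
    (∀ x : X, p * hX.inner m x = hX.inner m x) ∧
    (∀ x : X, hX.smul m (hX.inner m (hX.smul m (hX.inner m x))) = hX.smul m (hX.inner m x)) ∧
    (∀ x y : X, hX.inner (hX.smul m (hX.inner m x)) y = hX.inner x (hX.smul m (hX.inner m y))) ∧
    Set.range (fun x => hX.smul m (hX.inner m x)) = {y : X | ∃ a : A, y = hX.smul m (p * a)} := by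
  -- auxiliary: inner_smul_left
  have inner_smul_left : ∀ x y (a : A),
      hX.inner (hX.smul x a) y = star a * hX.inner x y := by
    intro x y a
    have := congrArg star (hX.inner_smul_right y x a)
    rw [hX.star_inner, star_mul, hX.star_inner] at this
    exact this
  have inner_sub_left : ∀ x y z,
      hX.inner (x - y) z = hX.inner x z - hX.inner y z := by
    intro x y z
    have h := hX.inner_add_left (x - y) y z
    rw [sub_add_cancel] at h
    exact eq_sub_of_add_eq h.symm
  have inner_sub_right : ∀ x y z,
      hX.inner x (y - z) = hX.inner x y - hX.inner x z := by
    intro x y z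
    have h := hX.inner_add_right x (y - z) z
    rw [sub_add_cancel] at h
    exact eq_sub_of_add_eq h.symm
  -- key computations
  have hmm : hX.inner m m = p := hp.symm
  have h1 : hX.smul m p = m := by
    have hz : hX.inner (hX.smul m p - m) (hX.smul m p - m) = 0 := by
      simp only [inner_sub_left, inner_sub_right, hX.inner_smul_right,
        inner_smul_left, hmm, hpstar, hp2]
      abel
    have := hX.inner_self_eq_zero _ hz
    exact sub_eq_zero.mp this
  have h3 : ∀ x : X, p * hX.inner m x = hX.inner m x := by
    intro x
    calc p * hX.inner m x = star p * hX.inner m x := by rw [hpstar]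
      _ = hX.inner (hX.smul m p) x := (inner_smul_left m x p).symm
      _ = hX.inner m x := by rw [h1]
  refine ⟨h1, ?_, h3, ?_, ?_, ?_⟩
  · intro a b
    rw [inner_smul_left, hX.inner_smul_right, hmm, ← mul_assoc, ← mul_assoc,
      mul_assoc (star (p*a)) p p, hp2, mul_assoc]
  · intro x
    congr 1
    rw [hX.inner_smul_right, hmm, h3]
  · intro x y
    rw [inner_smul_left, hX.inner_smul_right, hX.star_inner]
  · ext y
    constructor
    · rintro ⟨x, rfl⟩
      exact ⟨hX.inner m x, by rw [h3]⟩
    · rintro ⟨a, rfl⟩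
      exact ⟨hX.smul m (p * a), by simp only [hX.inner_smul_right, hmm, ← mul_assoc, hp2]⟩
end

section
/- Let N ≥ 2 and define D_N : Ξ → Ξ by (D_N ξ)(t) = N^{1/2} ξ(Nt), where Ξ is the Packer–Rieffel module over C(T) (n = 1). With α(f)(z) = f(z^N) and L(f)(z) = N⁻¹ Σ_{w^N=z} f(w), the operator D_N satisfies D_N(ξ·f) = (D_N ξ)·α(f) and L(⟨D_N ξ, D_N η⟩) = ⟨ξ, η⟩ for all ξ, η ∈ Ξ and f ∈ C(T). -/
open scoped BigOperators

/-- Membership in the Packer–Rieffel module `Ξ` over `C(𝕋)` (`n = 1`). -/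
def MemXi1 (ξ : ℝ → ℂ) : Prop :=
  Continuous ξ ∧ ∃ g : ℝ → ℝ, Continuous g ∧ (∃ B : ℝ, ∀ t, g t ≤ B) ∧
    TendstoUniformly
      (fun (F : Finset ℤ) (t : ℝ) => ∑ k ∈ F, ‖ξ (t - (k : ℝ))‖ ^ 2)
      g Filter.atTop

/-- The `C(𝕋)`-valued inner product on `Ξ`, as a `1`-periodic function of `t`. -/
noncomputable def xiInner1 (ξ η : ℝ → ℂ) (t : ℝ) : ℂ :=
  ∑' k : ℤ, (starRingEnd ℂ) (ξ (t - (k : ℝ))) * η (t - (k : ℝ))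

/-- The dilation operator `(D_N ξ)(t) = N^{1/2} ξ(Nt)`. -/
noncomputable def dilOp (N : ℕ) (ξ : ℝ → ℂ) (t : ℝ) : ℂ :=
  (Real.sqrt N : ℂ) * ξ ((N : ℝ) * t)

private def zEquiv (N : ℕ) (hN : 0 < N) : (Fin N × ℤ) ≃ ℤ where
  toFun p := (p.1 : ℤ) + (N : ℤ) * p.2
  invFun ℓ := (⟨(ℓ % (N : ℤ)).toNat, by
      have h0 : (0:ℤ) < N := by exact_mod_cast hN
      have h1 := Int.emod_lt_of_pos ℓ h0
      have h2 := Int.emod_nonneg ℓ (by omega : (N:ℤ) ≠ 0)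
      omega⟩, ℓ / (N : ℤ))
  left_inv p := by
    have h0 : (0:ℤ) < N := by exact_mod_cast hN
    have hj : (p.1 : ℤ) < N := by exact_mod_cast p.1.2
    have hj0 : (0:ℤ) ≤ (p.1 : ℤ) := by positivity
    have hmod : ((p.1 : ℤ) + (N:ℤ) * p.2) % (N:ℤ) = (p.1 : ℤ) := by
      rw [Int.add_mul_emod_self_left, Int.emod_eq_of_lt hj0 hj]
    have hdiv : ((p.1 : ℤ) + (N:ℤ) * p.2) / (N:ℤ) = p.2 := by
      rw [Int.add_mul_ediv_left _ _ (by omega : (N:ℤ) ≠ 0),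
        Int.ediv_eq_zero_of_lt hj0 hj, zero_add]
    refine Prod.ext (Fin.ext ?_) ?_
    · simp only [hmod]
      omega
    · simpa using hdiv
  right_inv ℓ := by
    have h0 : (0:ℤ) < N := by exact_mod_cast hN
    have h2 := Int.emod_nonneg ℓ (by omega : (N:ℤ) ≠ 0)
    simp only
    rw [Int.toNat_of_nonneg h2]
    exact Int.emod_add_mul_ediv ℓ (N:ℤ)

private lemma memXi_summable {ξ : ℝ → ℂ} (hξ : MemXi1 ξ) (t : ℝ) :
    Summable fun k : ℤ => ‖ξ (t - (k : ℝ))‖ ^ 2 := by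
  obtain ⟨-, g, -, -, hu⟩ := hξ
  exact ⟨g t, hu.tendsto_at t⟩

private lemma inner_summable {ξ η : ℝ → ℂ} (hξ : MemXi1 ξ) (hη : MemXi1 η) (t : ℝ) :
    Summable fun k : ℤ => (starRingEnd ℂ) (ξ (t - (k : ℝ))) * η (t - (k : ℝ)) := by
  have h1 := memXi_summable hξ t
  have h2 := memXi_summable hη t
  apply Summable.of_norm
  refine Summable.of_nonneg_of_le (fun k => norm_nonneg _) (fun k => ?_)
    ((h1.add h2).div_const 2)
  have : ‖(starRingEnd ℂ) (ξ (t - (k:ℝ))) * η (t - (k:ℝ))‖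
      = ‖ξ (t - (k:ℝ))‖ * ‖η (t - (k:ℝ))‖ := by
    rw [norm_mul, RCLike.norm_conj]
  rw [this]
  nlinarith [sq_nonneg (‖ξ (t - (k:ℝ))‖ - ‖η (t - (k:ℝ))‖)]

set_option maxHeartbeats 1000000 in
/-- The dilation `D_N` on `Ξ` satisfies `D_N(ξ·f) = (D_N ξ)·α(f)` and
`L(⟨D_N ξ, D_N η⟩) = ⟨ξ, η⟩`, where `α(f)(z) = f(z^N)` and
`L(F)(z) = N⁻¹ Σ_{w^N = z} F(w)`; here elements of `C(𝕋)` are represented by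
`1`-periodic functions on `ℝ`. -/
theorem stmt13 (N : ℕ) (hN : 2 ≤ N) (ξ η : ℝ → ℂ) (hξ : MemXi1 ξ) (hη : MemXi1 η)
    (f : ℝ → ℂ) (hf : Continuous f) (hper : ∀ t : ℝ, f (t + 1) = f t) :
    (∀ t : ℝ, dilOp N (fun s => ξ s * f s) t = dilOp N ξ t * f ((N : ℝ) * t)) ∧
    (∀ t : ℝ,
      (N : ℂ)⁻¹ * ∑ j ∈ Finset.range N,
        xiInner1 (dilOp N ξ) (dilOp N η) ((t - (j : ℝ)) / N) = xiInner1 ξ η t) := by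
  have hNpos : 0 < N := by omega
  have hNR : (N : ℝ) ≠ 0 := by positivity
  have hNC : (N : ℂ) ≠ 0 := by exact_mod_cast (by positivity : (N:ℝ) ≠ 0)
  constructor
  · intro t
    simp only [dilOp]
    ring
  · intro t
    set F : ℤ → ℂ := fun ℓ =>
      (starRingEnd ℂ) (ξ (t - (ℓ : ℝ))) * η (t - (ℓ : ℝ)) with hF
    have hFs : Summable F := inner_summable hξ hη t
    set e := zEquiv N hNpos with he
    have hsq : ((Real.sqrt N : ℝ) : ℂ) * ((Real.sqrt N : ℝ) : ℂ) = (N : ℂ) := by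
      rw [← Complex.ofReal_mul, Real.mul_self_sqrt (by positivity)]
      norm_num
    have hterm : ∀ (j : ℕ), j < N → ∀ k : ℤ,
        (starRingEnd ℂ) (dilOp N ξ ((t - (j:ℝ)) / N - (k : ℝ))) *
          dilOp N η ((t - (j:ℝ)) / N - (k : ℝ)) = (N : ℂ) * F ((j : ℤ) + (N:ℤ) * k) := by
      intro j hj k
      have hx : (N : ℝ) * ((t - (j:ℝ)) / N - (k : ℝ)) = t - (((j : ℤ) + (N:ℤ) * k : ℤ) : ℝ) := by
        push_cast
        field_simp
        ring
      simp only [dilOp, hx, map_mul, Complex.conj_ofReal, hF]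
      linear_combination ((starRingEnd ℂ) (ξ (t - (((j : ℤ) + (N:ℤ) * k : ℤ) : ℝ))) *
        η (t - (((j : ℤ) + (N:ℤ) * k : ℤ) : ℝ))) * hsq
    have hsum_j : ∀ j ∈ Finset.range N,
        xiInner1 (dilOp N ξ) (dilOp N η) ((t - (j:ℝ)) / N)
          = (N : ℂ) * ∑' k : ℤ, F ((j : ℤ) + (N:ℤ) * k) := by
      intro j hj
      unfold xiInner1
      rw [tsum_congr (hterm j (Finset.mem_range.mp hj)), tsum_mul_left]
    rw [Finset.sum_congr rfl hsum_j, ← Finset.mul_sum, ← mul_assoc,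
      inv_mul_cancel₀ hNC, one_mul]
    have hFe : Summable (fun p : Fin N × ℤ => F (e p)) := e.summable_iff.mpr hFs
    have hfiber : ∀ j : Fin N, Summable fun k : ℤ => F (e (j, k)) := by
      intro j
      exact hFe.comp_injective (i := fun k : ℤ => ((j, k) : Fin N × ℤ))
        (fun a b hab => by simpa using hab)
    have key : ∑' ℓ : ℤ, F ℓ = ∑ j ∈ Finset.range N, ∑' k : ℤ, F ((j : ℤ) + (N:ℤ) * k) := by
      rw [← e.tsum_eq F, Summable.tsum_prod' hFe hfiber, tsum_fintype,
        ← Fin.sum_univ_eq_sum_range (fun j => ∑' k : ℤ, F ((j : ℤ) + (N:ℤ) * k))]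
      simp [he, zEquiv]
    rw [← key]
    rfl
end
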